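/- arXiv:2011.08283 — 2 statements merged into one kernel-verified Lean document; each statement's English description precedes it below -/
import Mathlib

section
/- Let K be a commutative ring and let L be a Lie algebra over K whose underlying K-module is free. Then the canonical map ι : L → U(L) from L into its universal enveloping algebra is injective, and it is a Lie algebra homomorphism with respect to the commutator bracket on U(L), i.e. ι(⁅x,y⁆) = ι(x)·ι(y) − ι(y)·ι(x) for all x, y ∈ L. -/
/-!
Choose a basis `(x_i)` of `L` indexed by a well-ordered set and let `L` act on the free module
on sorted lists of indices, i.e. on the monomials `x_J` of the symmetric algebra: `x_i · x_J` is
the monomial `x_{iJ}` when `i ≤ min J`, and otherwise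
`x_i · x_{jJ} = x_j · (x_i · x_J) + [x_i, x_j] · x_J`, which is a recursion on `(|J|, i)`.
That this is a representation is proved by induction on `(|J|, i, j)`, the Jacobi identity
carrying the inductive step. The representation factors through `U(L)`, and `x ↦ x · 1` is
injective, hence so is `ι`.
-/

open Finsupp

attribute [local instance 100] LieRing.ofAssociativeRing

theorem Finsupp.apply_eq_zero_of_forall_single {α R M : Type*} [Semiring R] [AddCommMonoid M]
    [Module R M] (f : (α →₀ R) →ₗ[R] M) {v : α →₀ R}
    (h : ∀ a ∈ v.support, f (single a 1) = 0) : f v = 0 := by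
  rw [← v.sum_single, map_finsuppSum]
  exact Finset.sum_eq_zero fun a ha => by
    beta_reduce
    rw [← smul_single_one, map_smul, h a ha, smul_zero]

theorem Finsupp.exists_mem_support_of_mem_support_sum_smul {α β R : Type*} [Semiring R]
    {f : α →₀ R} {F : α → β →₀ R} {m : β} (hm : m ∈ (f.sum fun a c => c • F a).support) :
    ∃ a ∈ f.support, m ∈ (F a).support := by
  classical
  obtain ⟨a, ha, hm⟩ := Finset.mem_biUnion.mp (support_sum hm)
  exact ⟨a, ha, support_smul hm⟩

namespace LinearMap

variable {K L V : Type*} [CommRing K] [LieRing L] [LieAlgebra K L] [AddCommGroup V] [Module K V]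
  (ρ : L →ₗ[K] Module.End K V)

def lieDefect : L →ₗ[K] L →ₗ[K] Module.End K V :=
  LinearMap.mk₂ K (fun x y => ρ x * ρ y - ρ y * ρ x - ρ ⁅x, y⁆)
    (by intros; simp only [map_add, add_lie, add_mul, mul_add]; abel)
    (by intros; simp only [map_smul, smul_lie, smul_mul_assoc, mul_smul_comm, smul_sub])
    (by intros; simp only [map_add, lie_add, add_mul, mul_add]; abel)
    (by intros; simp only [map_smul, lie_smul, smul_mul_assoc, mul_smul_comm, smul_sub])

theorem lieDefect_apply (x y : L) :
    ρ.lieDefect x y = ρ x * ρ y - ρ y * ρ x - ρ ⁅x, y⁆ := rfl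

theorem lieDefect_swap (x y : L) : ρ.lieDefect y x = -ρ.lieDefect x y := by
  rw [lieDefect_apply, lieDefect_apply, ← lie_skew, map_neg]
  abel

theorem lieDefect_apply_eq_zero_of_basis {ι : Type*} [LinearOrder ι] (b : Module.Basis ι K L)
    {v : V} (h : ∀ i j, j < i → ρ.lieDefect (b i) (b j) v = 0) (x y : L) :
    ρ.lieDefect x y v = 0 := by
  suffices ρ.lieDefect.compr₂ (applyₗ v) = 0 from congr($this x y)
  refine b.ext fun i => b.ext fun j => ?_
  rcases lt_trichotomy i j with hij | rfl | hij
  · simp [lieDefect_swap ρ (b j), h j i hij]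
  · simp [lieDefect_apply]
  · simpa using h i j hij

theorem lieDefect_apply_eq_zero_iff {x y : L} {v : V} :
    ρ.lieDefect x y v = 0 ↔ ρ x (ρ y v) = ρ y (ρ x v) + ρ ⁅x, y⁆ v := by
  rw [lieDefect_apply, sub_apply, sub_apply, Module.End.mul_apply, Module.End.mul_apply,
    sub_sub, sub_eq_zero]

theorem lieDefect_apply_apply_eq_zero {x y z : L} {u : V}
    (hu : ∀ x y, ρ.lieDefect x y u = 0) (hxz : ρ.lieDefect x z (ρ y u) = 0)
    (hyz : ρ.lieDefect y z (ρ x u) = 0) : ρ.lieDefect x y (ρ z u) = 0 := by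
  have hu' := fun x y => (ρ.lieDefect_apply_eq_zero_iff).mp (hu x y)
  have jacobi : ρ ⁅x, ⁅y, z⁆⁆ u = ρ ⁅⁅x, y⁆, z⁆ u + ρ ⁅y, ⁅x, z⁆⁆ u := by
    rw [leibniz_lie, map_add, add_apply]
  rw [lieDefect_apply_eq_zero_iff] at hxz hyz ⊢
  rw [hu' y z, hu' x z, map_add, map_add, hxz, hyz, hu' x y, hu' x ⁅y, z⁆, hu' y ⁅x, z⁆,
    hu' ⁅x, y⁆ z, jacobi, map_add]
  abel

def toLieHomOfLieDefect (h : ∀ x y, ρ.lieDefect x y = 0) : L →ₗ⁅K⁆ Module.End K V :=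
  { ρ with map_lie' := fun {x y} => (sub_eq_zero.mp (h x y)).symm }

end LinearMap

namespace PBW

variable {K L B : Type*} [CommRing K] [LieRing L] [LieAlgebra K L] [LinearOrder B]
  (b : Module.Basis B K L)

attribute [local instance] WellFoundedLT.toWellFoundedRelation

/-- The guard on `M.length` always holds (`length_le_of_mem_support_basisAct`); it only makes the
recursion visibly well founded. -/
noncomputable def basisAct [WellFoundedLT B] : B → List B → List B →₀ K
  | i, [] => single [i] 1
  | i, j :: J =>
    if i ≤ j then single (i :: j :: J) 1
    else (basisAct i J).sum (fun M c => c • if M.length ≤ J.length + 1 then basisAct j M else 0)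
      + (b.repr ⁅b i, b j⁆).sum fun k c => c • basisAct k J
termination_by i J => (J.length, i)
decreasing_by
  · exact Prod.Lex.left _ _ (by simp)
  · rcases (‹M.length ≤ J.length + 1›).lt_or_eq with hM | hM
    · exact Prod.Lex.left _ _ (by simpa using hM)
    · exact hM ▸ Prod.Lex.right _ (not_le.mp ‹¬i ≤ j›)
  · exact Prod.Lex.left _ _ (by simp)

variable [WellFoundedLT B]

theorem basisAct_nil (i : B) : basisAct b i [] = single [i] 1 := by
  rw [basisAct]

theorem basisAct_cons_of_le {i j : B} (h : i ≤ j) (J : List B) :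
    basisAct b i (j :: J) = single (i :: j :: J) 1 := by
  rw [basisAct, if_pos h]

theorem length_le_of_mem_support_basisAct {i : B} {J M : List B}
    (hM : M ∈ (basisAct b i J).support) : M.length ≤ J.length + 1 := by
  fun_induction basisAct b i J generalizing M with
  | case1 i | case2 i j J =>
    obtain rfl := Finset.mem_singleton.mp (support_single_subset hM)
    simp
  | case3 i j J _ _ ih₂ ih₃ =>
    rcases Finset.mem_union.mp (support_add hM) with hM | hM
    · obtain ⟨M', hM', hM⟩ := exists_mem_support_of_mem_support_sum_smul hM
      split_ifs at hM with hlen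
      · have := ih₂ M' hlen hM
        simp only [List.length_cons]
        omega
      · simp at hM
    · obtain ⟨k, -, hM⟩ := exists_mem_support_of_mem_support_sum_smul hM
      have := ih₃ k hM
      simp only [List.length_cons]
      omega

theorem pairwise_of_mem_support_basisAct {i : B} {J M : List B} (hJ : J.Pairwise (· ≤ ·))
    (hM : M ∈ (basisAct b i J).support) : M.Pairwise (· ≤ ·) := by
  fun_induction basisAct b i J generalizing M with
  | case1 i =>
    obtain rfl := Finset.mem_singleton.mp (support_single_subset hM)
    simp
  | case2 i j J hij =>
    obtain rfl := Finset.mem_singleton.mp (support_single_subset hM)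
    exact hJ.cons_cons_of_trans hij
  | case3 i j J _ ih₁ ih₂ ih₃ =>
    have hJ' := hJ.of_cons
    rcases Finset.mem_union.mp (support_add hM) with hM | hM
    · obtain ⟨M', hM', hM⟩ := exists_mem_support_of_mem_support_sum_smul hM
      split_ifs at hM with hlen
      · exact ih₂ M' hlen (ih₁ hJ' hM') hM
      · simp at hM
    · obtain ⟨k, -, hM⟩ := exists_mem_support_of_mem_support_sum_smul hM
      exact ih₃ k hJ' hM

theorem basisAct_cons_of_lt {i j : B} (h : j < i) (J : List B) :
    basisAct b i (j :: J) = (basisAct b i J).sum (fun M c => c • basisAct b j M)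
      + (b.repr ⁅b i, b j⁆).sum fun k c => c • basisAct b k J := by
  rw [basisAct, if_neg h.not_ge]
  congr 1
  exact sum_congr fun M hM => by rw [if_pos (length_le_of_mem_support_basisAct b hM)]

/-- Lists that are not sorted are not monomials and are sent to `0`. -/
noncomputable def rep : L →ₗ[K] Module.End K (List B →₀ K) :=
  b.constr K fun i => linearCombination K fun J => if J.Pairwise (· ≤ ·) then basisAct b i J else 0

theorem rep_basis_single {J : List B} (hJ : J.Pairwise (· ≤ ·)) (i : B) :
    rep b (b i) (single J 1) = basisAct b i J := by
  simp [rep, hJ]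

theorem rep_single_of_not_pairwise {J : List B} (hJ : ¬J.Pairwise (· ≤ ·)) (x : L) :
    rep b x (single J 1) = 0 := by
  simp [rep, Module.Basis.constr_apply, hJ, Finsupp.sum]

theorem rep_single {J : List B} (hJ : J.Pairwise (· ≤ ·)) (x : L) :
    rep b x (single J 1) = (b.repr x).sum fun k c => c • basisAct b k J := by
  simp [rep, Module.Basis.constr_apply, hJ, Finsupp.sum]

theorem rep_basis_single_of_pairwise_cons {i : B} {J : List B} (h : (i :: J).Pairwise (· ≤ ·)) :
    rep b (b i) (single J 1) = single (i :: J) 1 := by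
  rw [rep_basis_single b h.of_cons]
  cases J with
  | nil => exact basisAct_nil b i
  | cons j J => exact basisAct_cons_of_le b (List.rel_of_pairwise_cons h List.mem_cons_self) J

theorem rep_basis_basisAct {J : List B} (hJ : J.Pairwise (· ≤ ·)) (i j : B) :
    rep b (b j) (basisAct b i J) = (basisAct b i J).sum fun M c => c • basisAct b j M := by
  rw [rep, Module.Basis.constr_basis, linearCombination_apply]
  exact sum_congr fun M hM => by rw [if_pos (pairwise_of_mem_support_basisAct b hJ hM)]

theorem rep_basis_single_cons_of_lt {i j : B} (hji : j < i) {J : List B}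
    (hJ : (j :: J).Pairwise (· ≤ ·)) :
    rep b (b i) (single (j :: J) 1) =
      rep b (b j) (rep b (b i) (single J 1)) + rep b ⁅b i, b j⁆ (single J 1) := by
  rw [rep_basis_single b hJ, basisAct_cons_of_lt b hji, rep_basis_single b hJ.of_cons,
    rep_basis_basisAct b hJ.of_cons, rep_single b hJ.of_cons]

theorem lieDefect_rep_single_of_not_pairwise {J : List B} (hJ : ¬J.Pairwise (· ≤ ·)) (x y : L) :
    (rep b).lieDefect x y (single J 1) = 0 := by
  simp [LinearMap.lieDefect_apply, rep_single_of_not_pairwise b hJ]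

theorem lieDefect_rep_basis_single_of_pairwise_cons {i j : B} (hji : j < i) {J : List B}
    (hJ : (j :: J).Pairwise (· ≤ ·)) : (rep b).lieDefect (b i) (b j) (single J 1) = 0 := by
  rw [LinearMap.lieDefect_apply_eq_zero_iff, rep_basis_single_of_pairwise_cons b hJ,
    rep_basis_single_cons_of_lt b hji hJ]

theorem lieDefect_rep_basis_single_of_length_eq {n : ℕ}
    (hlow : ∀ M : List B, M.Pairwise (· ≤ ·) → M.length < n →
      ∀ x y, (rep b).lieDefect x y (single M 1) = 0)
    (i j : B) (hji : j < i) {J : List B} (hJ : J.Pairwise (· ≤ ·)) (hlen : J.length = n) :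
    (rep b).lieDefect (b i) (b j) (single J 1) = 0 := by
  -- Unless `j ≤ min J`, write `x_J = x_k · x_{J'}` with `k < j < i`; the Jacobi step then needs
  -- only the lexicographically smaller pairs `(i, k)` and `(j, k)`.
  by_cases hjJ : (j :: J).Pairwise (· ≤ ·)
  · exact lieDefect_rep_basis_single_of_pairwise_cons b hji hjJ
  obtain ⟨k, J', rfl, hkj⟩ : ∃ k J', J = k :: J' ∧ k < j := by
    cases J with
    | nil => exact absurd (List.pairwise_singleton _ j) hjJ
    | cons k J' => exact ⟨k, J', rfl, not_le.mp fun hjk => hjJ (hJ.cons_cons_of_trans hjk)⟩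
  have hJ' := hJ.of_cons
  have hsmaller : ∀ i' j', j' < i' → Prod.Lex (· < ·) (· < ·) (i', j') (i, j) → ∀ l,
      (rep b).lieDefect (b i') (b j') (rep b (b l) (single J' 1)) = 0 := by
    intro i' j' hji' hlt l
    rw [rep_basis_single b hJ']
    refine Finsupp.apply_eq_zero_of_forall_single _ fun M hM => ?_
    have hM' := pairwise_of_mem_support_basisAct b hJ' hM
    rcases (length_le_of_mem_support_basisAct b hM).lt_or_eq with hMlen | hMlen
    · exact hlow M hM' (by simpa [← hlen] using hMlen) _ _
    · exact lieDefect_rep_basis_single_of_length_eq hlow i' j' hji' hM' (by simpa [← hlen])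
  rw [← rep_basis_single_of_pairwise_cons b hJ]
  exact LinearMap.lieDefect_apply_apply_eq_zero _
    (hlow J' hJ' (by simp [← hlen]))
    (hsmaller i k (hkj.trans hji) (Prod.Lex.right _ hkj) j)
    (hsmaller j k hkj (Prod.Lex.left _ _ hji) i)
termination_by (i, j)
decreasing_by exact hlt

theorem lieDefect_rep_single_of_pairwise {J : List B} (hJ : J.Pairwise (· ≤ ·)) (x y : L) :
    (rep b).lieDefect x y (single J 1) = 0 :=
  LinearMap.lieDefect_apply_eq_zero_of_basis _ b (fun i j hji =>
    lieDefect_rep_basis_single_of_length_eq b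
      (fun M hM _ => lieDefect_rep_single_of_pairwise hM) i j hji hJ rfl) x y
termination_by J.length
decreasing_by assumption

theorem lieDefect_rep (x y : L) : (rep b).lieDefect x y = 0 := by
  refine LinearMap.ext fun v => Finsupp.apply_eq_zero_of_forall_single _ fun J _ => ?_
  by_cases hJ : J.Pairwise (· ≤ ·)
  · exact lieDefect_rep_single_of_pairwise b hJ x y
  · exact lieDefect_rep_single_of_not_pairwise b hJ x y

theorem rep_single_nil (x : L) : rep b x (single [] 1) = (b.repr x).mapDomain fun k => [k] := by
  rw [rep_single b List.Pairwise.nil, mapDomain]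
  exact sum_congr fun k _ => by rw [basisAct_nil, smul_single_one]

theorem injective_rep_apply_single_nil : Function.Injective fun x => rep b x (single [] 1) := by
  intro x y h
  simp only [rep_single_nil] at h
  exact b.repr.injective (mapDomain_injective List.singleton_injective h)

end PBW

theorem UniversalEnvelopingAlgebra.ι_injective_of_basis {K L B : Type*} [CommRing K] [LieRing L]
    [LieAlgebra K L] (b : Module.Basis B K L) :
    Function.Injective (ι K : L → UniversalEnvelopingAlgebra K L) := by
  obtain ⟨_, _⟩ := exists_wellFoundedLT B
  let ρ := (PBW.rep b).toLieHomOfLieDefect (PBW.lieDefect_rep b)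
  intro x y hxy
  have hρ : ρ x = ρ y := by simpa only [lift_ι_apply] using congr(lift K ρ $hxy)
  exact PBW.injective_rep_apply_single_nil b congr($hρ (single [] 1))

/-- If a Lie algebra `L` over a commutative ring `K` is free as a `K`-module, then the
canonical map `ι : L → U(L)` into the universal enveloping algebra is injective, and it is a
Lie algebra homomorphism for the commutator bracket on `U(L)`:
`ι ⁅x, y⁆ = ι x * ι y - ι y * ι x`. -/
theorem pbw_iota_injective (K : Type*) [CommRing K] (L : Type*) [LieRing L] [LieAlgebra K L]
    [Module.Free K L] :
    Function.Injective (fun x : L => UniversalEnvelopingAlgebra.ι K x) ∧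
    ∀ x y : L, UniversalEnvelopingAlgebra.ι K ⁅x, y⁆ =
      UniversalEnvelopingAlgebra.ι K x * UniversalEnvelopingAlgebra.ι K y -
        UniversalEnvelopingAlgebra.ι K y * UniversalEnvelopingAlgebra.ι K x :=
  ⟨UniversalEnvelopingAlgebra.ι_injective_of_basis (Module.Free.chooseBasis K L), fun x y =>
    (UniversalEnvelopingAlgebra.ι K).map_lie x y⟩
end

section
/- Let a, b, c be positive real numbers and let θ_p, θ_q ∈ [0, π]. Suppose there exist two distinct positive integers m₁ ≠ m₂ such that for each m ∈ {m₁, m₂} one has cosh(m·a/2)·cosh(b/2) + sinh(m·a/2)·sinh(b/2)·cos θ_p = cosh(m·a/2)·cosh(c/2) + sinh(m·a/2)·sinh(c/2)·cos θ_q. Then b = c and θ_p = θ_q. -/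
open Real

/-- If `cosh (m*a/2) * cosh (b/2) + sinh (m*a/2) * sinh (b/2) * cos θ_p
  = cosh (m*a/2) * cosh (c/2) + sinh (m*a/2) * sinh (c/2) * cos θ_q`
holds for two distinct positive integers `m`, with `a, b, c > 0` and angles in `[0, π]`,
then `b = c` and `θ_p = θ_q`. -/
theorem lengths_and_angles_eq (a b c : ℝ) (ha : 0 < a) (hb : 0 < b) (hc : 0 < c)
    (θp θq : ℝ) (hθp : θp ∈ Set.Icc 0 π) (hθq : θq ∈ Set.Icc 0 π)
    (m₁ m₂ : ℕ) (hm₁ : 0 < m₁) (hm₂ : 0 < m₂) (hne : m₁ ≠ m₂)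
    (h : ∀ m ∈ ({m₁, m₂} : Set ℕ),
      cosh (m * a / 2) * cosh (b / 2) + sinh (m * a / 2) * sinh (b / 2) * cos θp =
        cosh (m * a / 2) * cosh (c / 2) + sinh (m * a / 2) * sinh (c / 2) * cos θq) :
    b = c ∧ θp = θq := by
  set t₁ : ℝ := (m₁ : ℝ) * a / 2 with ht₁
  set t₂ : ℝ := (m₂ : ℝ) * a / 2 with ht₂
  have h₁ := h m₁ (Or.inl rfl)
  have h₂ := h m₂ (Or.inr rfl)
  set C : ℝ := cosh (b / 2) - cosh (c / 2) with hC
  set S : ℝ := sinh (c / 2) * cos θq - sinh (b / 2) * cos θp with hS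
  have e₁ : C * cosh t₁ = S * sinh t₁ := by rw [hC, hS]; nlinarith [h₁]
  have e₂ : C * cosh t₂ = S * sinh t₂ := by rw [hC, hS]; nlinarith [h₂]
  have htne : t₁ ≠ t₂ := by
    rw [ht₁, ht₂]
    intro hh
    apply hne
    have hh' : (m₁ : ℝ) = m₂ := by
      have := mul_left_cancel₀ (by positivity : a / 2 ≠ 0) (by linarith [hh] : a / 2 * m₁ = a / 2 * m₂)
      exact this
    exact_mod_cast hh'
  have hsd : sinh (t₁ - t₂) ≠ 0 := by
    simp [Real.sinh_eq_zero, sub_eq_zero, htne]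
  have hS0 : S = 0 := by
    have k1 : C * cosh t₁ * cosh t₂ = S * sinh t₁ * cosh t₂ := by rw [e₁]
    have k2 : C * cosh t₂ * cosh t₁ = S * sinh t₂ * cosh t₁ := by rw [e₂]
    have key : S * sinh (t₁ - t₂) = 0 := by
      rw [Real.sinh_sub]; linear_combination k2 - k1
    exact (mul_eq_zero.mp key).resolve_right hsd
  have hC0 : C = 0 := by
    have := e₁
    rw [hS0, zero_mul] at this
    exact (mul_eq_zero.mp this).resolve_right (Real.cosh_pos t₁).ne'
  have hbc : b = c := by
    have heq : cosh (b / 2) = cosh (c / 2) := by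
      have := hC0; rw [hC] at this; linarith
    have h2 := Real.cosh_strictMonoOn.injOn (Set.mem_Ici.mpr (by linarith : (0:ℝ) ≤ b / 2))
      (Set.mem_Ici.mpr (by linarith : (0:ℝ) ≤ c / 2)) heq
    linarith
  refine ⟨hbc, ?_⟩
  have hsinh : sinh (b / 2) > 0 := Real.sinh_pos_iff.mpr (by linarith)
  have hcos : cos θp = cos θq := by
    rw [hS, hbc] at hS0
    have hz : sinh (c / 2) * (cos θq - cos θp) = 0 := by linarith [hS0]
    have h2 := (mul_eq_zero.mp hz).resolve_left (by rw [hbc] at hsinh; exact hsinh.ne')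
    linarith
  exact Real.injOn_cos hθp hθq hcos
end
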